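/- If π^1 ≠ π^2 are distinct tuples giving factorizations of 2l, then at any intersection point t of their conformal weights, the vectors (r_{π^1} t + s_{π^1}, 4 r_{π^1} t) and (r_{π^2} t + s_{π^2}, 4 r_{π^2} t) in ℝ² are linearly independent. -/

import Mathlib

/-! Expanding, the determinant equals `4t (s₁r₂ - s₂r₁)`. The intersection point `t` is a nonzero
real, and `s₁r₂ = 2ⁿ ∏ pᵢ^(nᵢ-kᵢ¹+kᵢ²)`, `s₂r₁ = 2ⁿ ∏ pᵢ^(nᵢ-kᵢ²+kᵢ¹)`; by unique factorization
these agree only if `nᵢ - kᵢ¹ + kᵢ² = nᵢ - kᵢ² + kᵢ¹` for all `i`, i.e. only if `k¹ = k²`. -/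

section PrimeProducts

variable {ι : Type*} [Fintype ι] {p : ι → ℕ}

theorem Nat.factorization_prod_pow_apply (hp : ∀ i, (p i).Prime) (hinj : Function.Injective p)
    (a : ι → ℕ) (j : ι) : (∏ i, p i ^ a i).factorization (p j) = a j := by
  classical
  rw [Nat.factorization_prod fun i _ => pow_ne_zero _ (hp i).ne_zero, Finsupp.finsetSum_apply,
    Finset.sum_eq_single j]
  · simp [(hp j).factorization_pow]
  · intro i _ hij
    rw [(hp i).factorization_pow, Finsupp.single_eq_of_ne (hinj.ne hij).symm]
  · simp

theorem Nat.prod_pow_injective (hp : ∀ i, (p i).Prime) (hinj : Function.Injective p) :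
    Function.Injective fun a : ι → ℕ => ∏ i, p i ^ a i := fun a b h => funext fun j => by
  rw [← Nat.factorization_prod_pow_apply hp hinj a j, ← Nat.factorization_prod_pow_apply hp hinj b j]
  exact congrArg (fun m => m.factorization (p j)) h

theorem Nat.prod_pow_sub_mul_ne (hp : ∀ i, (p i).Prime) (hinj : Function.Injective p)
    (e : ι → ℕ) {k₁ k₂ : ι → ℕ} (hne : k₁ ≠ k₂) {c : ℕ} (hc : c ≠ 0) :
    (∏ i, p i ^ (e i - k₁ i)) * (c * ∏ i, p i ^ k₂ i)
      ≠ (∏ i, p i ^ (e i - k₂ i)) * (c * ∏ i, p i ^ k₁ i) := by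
  intro h
  have hprod : ∏ i, p i ^ (e i - k₁ i + k₂ i) = ∏ i, p i ^ (e i - k₂ i + k₁ i) := by
    simp only [pow_add, Finset.prod_mul_distrib]
    apply Nat.eq_of_mul_eq_mul_left (Nat.pos_of_ne_zero hc)
    linear_combination h
  have hexp := Nat.prod_pow_injective hp hinj hprod
  exact hne <| funext fun i => by have := congrFun hexp i; omega

end PrimeProducts

theorem det_two_eq_mul_sub {R : Type*} [CommRing R] (r₁ s₁ r₂ s₂ t : R) :
    (r₁ * t + s₁) * (4 * r₂ * t) - (r₂ * t + s₂) * (4 * r₁ * t) = 4 * t * (s₁ * r₂ - s₂ * r₁) := by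
  ring

theorem stmt_5_general (n P : ℕ) (p e : Fin P → ℕ)
    (hp : ∀ i, (p i).Prime)
    (hinj : Function.Injective p)
    (k1 k2 : Fin P → ℕ)
    (hne : k1 ≠ k2)
    (t : ℝ)
    (ht : t = ((2 : ℝ) ^ n)⁻¹ * ∏ i, (p i : ℝ) ^ ((e i : ℤ) - k1 i - k2 i)
      ∨ t = -(((2 : ℝ) ^ n)⁻¹ * ∏ i, (p i : ℝ) ^ ((e i : ℤ) - k1 i - k2 i))) :
    (((2 ^ n * ∏ i, p i ^ k1 i : ℕ) : ℝ) * t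
        + ((∏ i, p i ^ (e i - k1 i) : ℕ) : ℝ))
      * (4 * ((2 ^ n * ∏ i, p i ^ k2 i : ℕ) : ℝ) * t)
    - (((2 ^ n * ∏ i, p i ^ k2 i : ℕ) : ℝ) * t
        + ((∏ i, p i ^ (e i - k2 i) : ℕ) : ℝ))
      * (4 * ((2 ^ n * ∏ i, p i ^ k1 i : ℕ) : ℝ) * t) ≠ 0 := by
  have ht₀ : t ≠ 0 := by
    have hpos : (0 : ℝ) < ((2 : ℝ) ^ n)⁻¹ * ∏ i, (p i : ℝ) ^ ((e i : ℤ) - k1 i - k2 i) :=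
      mul_pos (by positivity) <| Finset.prod_pos fun i _ => zpow_pos (by exact_mod_cast (hp i).pos) _
    rcases ht with rfl | rfl
    exacts [hpos.ne', (neg_neg_iff_pos.mpr hpos).ne]
  have hcross := Nat.prod_pow_sub_mul_ne hp hinj e hne (pow_ne_zero n two_ne_zero)
  rw [det_two_eq_mul_sub]
  exact mul_ne_zero (mul_ne_zero four_ne_zero ht₀) (sub_ne_zero.mpr (by exact_mod_cast hcross))

/-- At an intersection point `t = ±(1/2^n)∏ pᵢ^{nᵢ-kᵢ¹-kᵢ²}` of the conformal
weights of two distinct tuples, the vectors `(r₁t+s₁, 4r₁t)` and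
`(r₂t+s₂, 4r₂t)` are linearly independent. -/
theorem stmt_5 (n P : ℕ) (p e : Fin P → ℕ)
    (hn : 1 ≤ n)
    (hp : ∀ i, (p i).Prime) (hodd : ∀ i, Odd (p i))
    (hinj : Function.Injective p)
    (k1 k2 : Fin P → ℕ) (hk1 : ∀ i, k1 i ≤ e i) (hk2 : ∀ i, k2 i ≤ e i)
    (hne : k1 ≠ k2)
    (t : ℝ)
    (ht : t = ((2 : ℝ) ^ n)⁻¹ * ∏ i, (p i : ℝ) ^ ((e i : ℤ) - k1 i - k2 i)
      ∨ t = -(((2 : ℝ) ^ n)⁻¹ * ∏ i, (p i : ℝ) ^ ((e i : ℤ) - k1 i - k2 i))) :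
    (((2 ^ n * ∏ i, p i ^ k1 i : ℕ) : ℝ) * t
        + ((∏ i, p i ^ (e i - k1 i) : ℕ) : ℝ))
      * (4 * ((2 ^ n * ∏ i, p i ^ k2 i : ℕ) : ℝ) * t)
    - (((2 ^ n * ∏ i, p i ^ k2 i : ℕ) : ℝ) * t
        + ((∏ i, p i ^ (e i - k2 i) : ℕ) : ℝ))
      * (4 * ((2 ^ n * ∏ i, p i ^ k1 i : ℕ) : ℝ) * t) ≠ 0 :=
  stmt_5_general n P p e hp hinj k1 k2 hne t ht
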